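/- arXiv:1004.1947 — 2 statements merged into one kernel-verified Lean document; each statement's English description precedes it below -/
import Mathlib

section
/- For every value system ≈, and every type σ, a term s of type σ satisfies s ≈_σ a if and only if its normal form [s] satisfies [s] ≈_σ a. -/
/-- Simple types over countably many base types. -/
inductive Ty : Type
  | base : ℕ → Ty
  | arr : Ty → Ty → Ty
  deriving DecidableEq

/-- Simply typed lambda terms over a countable set of typed names. -/
inductive Tm : Ty → Type
  | var : ℕ → (σ : Ty) → Tm σ
  | app : ∀ {σ τ : Ty}, Tm (Ty.arr σ τ) → Tm σ → Tm τ
  | lam : ℕ → (σ : Ty) → ∀ {τ : Ty}, Tm τ → Tm (Ty.arr σ τ)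

/-- The semantics of a value system: for each type, the type of values together with the
possible-value relation, defined by induction on types.  At a function type `σ → τ` the values
are functions from `D(σ)` (the range of the relation at `σ`, as a subtype) to values at `τ`,
and `s ≈ f` iff `s t ≈ f a` whenever `t ≈ a`. -/
def sem (Val : ℕ → Type) (R : ∀ β, Tm (Ty.base β) → Val β → Prop) :
    (σ : Ty) → (A : Type) × (Tm σ → A → Prop)
  | Ty.base β => ⟨Val β, R β⟩
  | Ty.arr σ τ =>
      ⟨{x : (sem Val R σ).1 // ∃ t : Tm σ, (sem Val R σ).2 t x} → (sem Val R τ).1,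
       fun s f => ∀ (t : Tm σ) (x : (sem Val R σ).1) (h : (sem Val R σ).2 t x),
         (sem Val R τ).2 (Tm.app s t) (f ⟨x, t, h⟩)⟩

/-- For every value system `≈` (given by relations `R` at base types, closed
under normalization) and every type `σ`, a term `s : σ` satisfies `s ≈_σ a` iff
`[s] ≈_σ a`, for a normalization operator satisfying N1 and N2. -/
theorem stmt0
    (nf : ∀ {σ : Ty}, Tm σ → Tm σ)
    (hN1 : ∀ {σ : Ty} (s : Tm σ), nf (nf s) = nf s)
    (hN2 : ∀ {σ τ : Ty} (s : Tm (Ty.arr σ τ)) (t : Tm σ),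
      nf (Tm.app (nf s) t) = nf (Tm.app s t))
    (Val : ℕ → Type) (R : ∀ β, Tm (Ty.base β) → Val β → Prop)
    (hR : ∀ β (s : Tm (Ty.base β)) (a : Val β), R β s a ↔ R β (nf s) a)
    (σ : Ty) (s : Tm σ) (a : (sem Val R σ).1) :
    (sem Val R σ).2 s a ↔ (sem Val R σ).2 (nf s) a := by
  induction σ with
  | base β => exact hR β s a
  | arr σ τ ihσ ihτ =>
      constructor
      · intro h t x hx
        have := h t x hx
        rw [ihτ] at this ⊢
        rwa [hN2]
      · intro h t x hx
        have := h t x hx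
        rw [ihτ] at this ⊢
        rwa [hN2] at this
end

section
/- If an assignment I is admissible for a value system ≈, and θ is a substitution such that θ(x) ≈ I(x) for all x in the domain of θ, then for every term s, the evaluation Î(s) is defined and the substituted term θ̂(s) satisfies θ̂(s) ≈ Î(s). -/
/-- Update an assignment at the name `(m, σ0)`. -/
def updA (Val : ℕ → Type) (R : ∀ β, Tm (Ty.base β) → Val β → Prop)
    (I : ℕ → ∀ σ, (sem Val R σ).1) (m : ℕ) (σ0 : Ty) (a : (sem Val R σ0).1) :
    ℕ → ∀ σ, (sem Val R σ).1 := fun n σ =>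
  if h : n = m ∧ σ = σ0 then (h.2.symm ▸ a) else I n σ

/-- Update a substitution at the name `(x, σ0)`. -/
def updS (θ : ℕ → (σ : Ty) → Option (Tm σ)) (x : ℕ) (σ0 : Ty) (t : Tm σ0) :
    ℕ → (σ : Ty) → Option (Tm σ) := fun n σ =>
  if h : n = x ∧ σ = σ0 then some (h.2.symm ▸ t) else θ n σ

/-- The (partial) evaluation function of an assignment into the domains of a value system,
presented as an inductively defined evaluation relation.  The clause for `λ`-abstraction
requires the value to lie in `D(στ)` and to agree with the evaluation of the body under all
updates of the assignment by elements of `D(σ)`. -/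
inductive VEval (Val : ℕ → Type) (R : ∀ β, Tm (Ty.base β) → Val β → Prop) :
    (ℕ → ∀ σ, (sem Val R σ).1) → ∀ σ : Ty, Tm σ → (sem Val R σ).1 → Prop
  | var : ∀ (I : ℕ → ∀ σ, (sem Val R σ).1) (n : ℕ) (σ : Ty),
      VEval Val R I σ (Tm.var n σ) (I n σ)
  | app : ∀ {I : ℕ → ∀ σ, (sem Val R σ).1} {σ τ : Ty} {s : Tm (Ty.arr σ τ)} {t : Tm σ}
      {f : (sem Val R (Ty.arr σ τ)).1} {a : (sem Val R σ).1} (h : ∃ u : Tm σ, (sem Val R σ).2 u a),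
      VEval Val R I (Ty.arr σ τ) s f → VEval Val R I σ t a →
      VEval Val R I τ (Tm.app s t) (f ⟨a, h⟩)
  | lam : ∀ {I : ℕ → ∀ σ, (sem Val R σ).1} (n : ℕ) (σ : Ty) {τ : Ty} (s : Tm τ)
      (f : (sem Val R (Ty.arr σ τ)).1),
      (∃ u : Tm (Ty.arr σ τ), (sem Val R (Ty.arr σ τ)).2 u f) →
      (∀ (a : (sem Val R σ).1) (h : ∃ u : Tm σ, (sem Val R σ).2 u a),
        VEval Val R (updA Val R I n σ a) τ s (f ⟨a, h⟩)) →
      VEval Val R I (Ty.arr σ τ) (Tm.lam n σ s) f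

lemma relNf
    (nf : ∀ {σ : Ty}, Tm σ → Tm σ)
    (hN2 : ∀ {σ τ : Ty} (s : Tm (Ty.arr σ τ)) (t : Tm σ),
      nf (Tm.app (nf s) t) = nf (Tm.app s t))
    (Val : ℕ → Type) (R : ∀ β, Tm (Ty.base β) → Val β → Prop)
    (hR : ∀ β (s : Tm (Ty.base β)) (a : Val β), R β s a ↔ R β (nf s) a) :
    ∀ (σ : Ty) (s : Tm σ) (a : (sem Val R σ).1),
      (sem Val R σ).2 s a ↔ (sem Val R σ).2 (nf s) a := by
  intro σ
  induction σ with
  | base β => exact fun s a => hR β s a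
  | arr σ τ ihσ ihτ =>
    intro s a
    constructor
    · intro h t x hx
      have h1 := h t x hx
      rw [ihτ] at h1 ⊢
      rw [hN2]
      exact h1
    · intro h t x hx
      have h1 := h t x hx
      rw [ihτ] at h1 ⊢
      rw [hN2] at h1
      exact h1

lemma veval_det (Val : ℕ → Type) (R : ∀ β, Tm (Ty.base β) → Val β → Prop) :
    ∀ {I : ℕ → ∀ σ, (sem Val R σ).1} {σ : Ty} {s : Tm σ} {a b : (sem Val R σ).1},
      VEval Val R I σ s a → VEval Val R I σ s b → a = b := by
  intro I σ s a b h1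
  induction h1 with
  | var I n σ =>
    intro h2
    cases h2
    rfl
  | app h hf ht ihf iht =>
    intro h2
    cases h2 with
    | app h' hf' ht' =>
      have e1 := ihf hf'
      have e2 := iht ht'
      subst e1; subst e2
      rfl
  | lam n σ s f hex hb ih =>
    intro h2
    cases h2 with
    | lam _ _ _ _ hex' hb' =>
      funext p
      obtain ⟨x, hx⟩ := p
      exact ih x hx (hb' x hx)

lemma main_lemma
    (nf : ∀ {σ : Ty}, Tm σ → Tm σ)
    (hN2 : ∀ {σ τ : Ty} (s : Tm (Ty.arr σ τ)) (t : Tm σ),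
      nf (Tm.app (nf s) t) = nf (Tm.app s t))
    (sub : (ℕ → (σ : Ty) → Option (Tm σ)) → ∀ {σ : Ty}, Tm σ → Tm σ)
    (hS1 : ∀ θ (n : ℕ) (σ : Ty), sub θ (Tm.var n σ) = (θ n σ).getD (Tm.var n σ))
    (hS2 : ∀ θ {σ τ : Ty} (s : Tm (Ty.arr σ τ)) (t : Tm σ),
      sub θ (Tm.app s t) = Tm.app (sub θ s) (sub θ t))
    (hS3 : ∀ θ (x : ℕ) (σ : Ty) {τ : Ty} (s : Tm τ) (t : Tm σ),
      nf (Tm.app (sub θ (Tm.lam x σ s)) t) = nf (sub (updS θ x σ t) s))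
    (Val : ℕ → Type) (R : ∀ β, Tm (Ty.base β) → Val β → Prop)
    (hR : ∀ β (s : Tm (Ty.base β)) (a : Val β), R β s a ↔ R β (nf s) a) :
    ∀ {σ : Ty} (s : Tm σ) (I : ℕ → ∀ σ, (sem Val R σ).1)
      (θ : ℕ → (σ : Ty) → Option (Tm σ)),
      (∀ (n : ℕ) (σ' : Ty), (sem Val R σ').2 ((θ n σ').getD (Tm.var n σ')) (I n σ')) →
      ∃ a : (sem Val R σ).1, VEval Val R I σ s a ∧ (sem Val R σ).2 (sub θ s) a := by
  intro σ s
  induction s with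
  | var n σ =>
    intro I θ H
    refine ⟨I n σ, VEval.var I n σ, ?_⟩
    rw [hS1]
    exact H n σ
  | app s t ihs iht =>
    intro I θ H
    obtain ⟨f, hf1, hf2⟩ := ihs I θ H
    obtain ⟨a, ha1, ha2⟩ := iht I θ H
    refine ⟨f ⟨a, sub θ t, ha2⟩, VEval.app ⟨sub θ t, ha2⟩ hf1 ha1, ?_⟩
    rw [hS2]
    exact hf2 (sub θ t) a ha2
  | lam n σ0 s ih =>
    rename_i τ
    intro I θ H
    have Hupd : ∀ (a : (sem Val R σ0).1) (t : Tm σ0), (sem Val R σ0).2 t a →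
        ∀ (n' : ℕ) (σ' : Ty),
          (sem Val R σ').2 ((updS θ n σ0 t n' σ').getD (Tm.var n' σ'))
            (updA Val R I n σ0 a n' σ') := by
      intro a t ht n' σ'
      by_cases h : n' = n ∧ σ' = σ0
      · obtain ⟨rfl, rfl⟩ := h
        simpa [updS, updA] using ht
      · simp only [updS, updA, dif_neg h]
        exact H n' σ'
    let f : (sem Val R (Ty.arr σ0 τ)).1 := fun p =>
      Classical.choose (ih (updA Val R I n σ0 p.1)
        (updS θ n σ0 (Classical.choose p.2))
        (Hupd p.1 (Classical.choose p.2) (Classical.choose_spec p.2)))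
    have hf : ∀ p, VEval Val R (updA Val R I n σ0 p.1) τ s (f p) ∧
        (sem Val R τ).2 (sub (updS θ n σ0 (Classical.choose p.2)) s) (f p) := fun p =>
      Classical.choose_spec (ih (updA Val R I n σ0 p.1)
        (updS θ n σ0 (Classical.choose p.2))
        (Hupd p.1 (Classical.choose p.2) (Classical.choose_spec p.2)))
    have key : ∀ (t : Tm σ0) (x : (sem Val R σ0).1) (hx : (sem Val R σ0).2 t x),
        (sem Val R τ).2 (Tm.app (sub θ (Tm.lam n σ0 s)) t) (f ⟨x, t, hx⟩) := by
      intro t x hx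
      rw [relNf nf hN2 Val R hR, hS3, ← relNf nf hN2 Val R hR]
      obtain ⟨b, hb1, hb2⟩ := ih (updA Val R I n σ0 x) (updS θ n σ0 t) (Hupd x t hx)
      have hbe : b = f ⟨x, t, hx⟩ := veval_det Val R hb1 (hf ⟨x, t, hx⟩).1
      rw [← hbe]
      exact hb2
    exact ⟨f, VEval.lam n σ0 s f ⟨sub θ (Tm.lam n σ0 s), key⟩
      (fun a h => (hf ⟨a, h⟩).1), key⟩

/-- If an assignment `I` is admissible for a value system `≈` and `θ` is a
substitution with `θ(x) ≈ I(x)` for all `x ∈ dom θ`, then for every term `s` the evaluation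
`Î(s)` is defined and `θ̂(s) ≈ Î(s)`. -/
theorem stmt2
    (nf : ∀ {σ : Ty}, Tm σ → Tm σ)
    (hN1 : ∀ {σ : Ty} (s : Tm σ), nf (nf s) = nf s)
    (hN2 : ∀ {σ τ : Ty} (s : Tm (Ty.arr σ τ)) (t : Tm σ),
      nf (Tm.app (nf s) t) = nf (Tm.app s t))
    (sub : (ℕ → (σ : Ty) → Option (Tm σ)) → ∀ {σ : Ty}, Tm σ → Tm σ)
    (hS1 : ∀ θ (n : ℕ) (σ : Ty), sub θ (Tm.var n σ) = (θ n σ).getD (Tm.var n σ))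
    (hS2 : ∀ θ {σ τ : Ty} (s : Tm (Ty.arr σ τ)) (t : Tm σ),
      sub θ (Tm.app s t) = Tm.app (sub θ s) (sub θ t))
    (hS3 : ∀ θ (x : ℕ) (σ : Ty) {τ : Ty} (s : Tm τ) (t : Tm σ),
      nf (Tm.app (sub θ (Tm.lam x σ s)) t) = nf (sub (updS θ x σ t) s))
    (Val : ℕ → Type) (R : ∀ β, Tm (Ty.base β) → Val β → Prop)
    (hR : ∀ β (s : Tm (Ty.base β)) (a : Val β), R β s a ↔ R β (nf s) a)
    (I : ℕ → ∀ σ, (sem Val R σ).1)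
    (hadm : ∀ (n : ℕ) (σ : Ty), (sem Val R σ).2 (Tm.var n σ) (I n σ))
    (θ : ℕ → (σ : Ty) → Option (Tm σ))
    (hθ : ∀ (n : ℕ) (σ : Ty) (t : Tm σ), θ n σ = some t → (sem Val R σ).2 t (I n σ)) :
    ∀ (σ : Ty) (s : Tm σ), ∃ a : (sem Val R σ).1,
      VEval Val R I σ s a ∧ (sem Val R σ).2 (sub θ s) a := by
  intro σ s
  apply main_lemma nf hN2 sub hS1 hS2 hS3 Val R hR s I θ
  intro n σ'
  cases h : θ n σ' with
  | none => simpa using hadm n σ'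
  | some t => simpa using hθ n σ' t h
end
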